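/- Let τ, η, β be real numbers with η > 0, 0 < τ < 1, and β ≥ 1/τ + 1/η. Then the function f₁ is quasiconvex on the interval [1, ∞). -/

import Mathlib

open Real Filter

/-- The function `f₁` from the paper (Eq. (48)):
`f₁(x) = x·log(τ + log(1 + η/((x−1)ηβ + 1))) − (x−1)·log τ`. -/
noncomputable def f₁ (τ η β : ℝ) : ℝ → ℝ := fun x =>
  x * Real.log (τ + Real.log (1 + η / ((x - 1) * η * β + 1)))
    - (x - 1) * Real.log τ

/-!
`f₁` is in fact antitone on `[1, ∞)`, so its sublevel sets there are up-rays. Writing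
`D = (x - 1)ηβ + 1` and `L = log (1 + η / D)`, the derivative is nonpositive as soon as
`log (1 + L / τ) ≤ x η² β / (D (D + η) (τ + L))`. The left side is at most
`L (L + 2τ) / (2τ (τ + L))` because `log y ≤ sinh (log y)`; `exp t ≥ 1 + t + t² / 2` and
`log y ≥ 1 - 1 / y` then bound `L (L + 2τ) D (D + η)` by `2η (η + τD)`, and
`η + τ ≤ τηβ` (which is `β ≥ 1/τ + 1/η`) finishes.
-/

namespace Real

lemma log_le_half_sub_inv {y : ℝ} (hy : 1 ≤ y) : log y ≤ (y - y⁻¹) / 2 := by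
  rw [← sinh_log (by linarith)]
  exact self_le_sinh_iff.mpr (log_nonneg hy)

lemma log_mul_log_add_le {τ y : ℝ} (hτ : τ ≤ 1) (hy : 1 ≤ y) :
    log y * (log y + 2 * τ) * y ≤ 2 * (y - 1) * (y - 1 + τ) := by
  have hy0 : 0 < y := by linarith
  have hexp : 1 + log y + log y ^ 2 / 2 ≤ y := by
    simpa [exp_log hy0] using quadratic_le_exp_of_nonneg (log_nonneg hy)
  have hinv : y - 1 ≤ log y * y :=
    calc y - 1 = (1 - y⁻¹) * y := by field_simp
      _ ≤ log y * y := mul_le_mul_of_nonneg_right (one_sub_inv_le_log_of_pos hy0) hy0.le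
  nlinarith [mul_le_mul_of_nonneg_left hexp hy0.le,
    mul_le_mul_of_nonneg_left hinv (sub_nonneg.mpr hτ)]

end Real

lemma log_add_log_one_add_div_sub_log_le {τ η β D : ℝ} (hη : 0 < η) (hτ : 0 < τ)
    (hτ1 : τ ≤ 1) (hβ : η + τ ≤ τ * η * β) (hD : 1 ≤ D) :
    log (τ + log (1 + η / D)) - log τ
      ≤ (D - 1 + η * β) * η / (D * (D + η) * (τ + log (1 + η / D))) := by
  have hD0 : 0 < D := by linarith
  have hy : 1 ≤ 1 + η / D := by have := div_pos hη hD0; linarith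
  set L := log (1 + η / D)
  have hL0 : 0 ≤ L := log_nonneg hy
  have hτL : 0 < τ + L := by linarith
  have hpade : log (τ + L) - log τ ≤ L * (L + 2 * τ) / (2 * τ * (τ + L)) := by
    rw [← log_div hτL.ne' hτ.ne']
    calc _ ≤ ((τ + L) / τ - ((τ + L) / τ)⁻¹) / 2 :=
          log_le_half_sub_inv (by rw [le_div_iff₀ hτ]; linarith)
      _ = _ := by field_simp; ring
  have hcore : L * (L + 2 * τ) * (D * (D + η)) ≤ 2 * η * (η + τ * D) :=
    calc L * (L + 2 * τ) * (D * (D + η)) = L * (L + 2 * τ) * (1 + η / D) * D ^ 2 := by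
          field_simp
      _ ≤ 2 * (1 + η / D - 1) * (1 + η / D - 1 + τ) * D ^ 2 :=
          mul_le_mul_of_nonneg_right (log_mul_log_add_le hτ1 hy) (sq_nonneg D)
      _ = 2 * η * (η + τ * D) := by field_simp; ring
  have hβ' : 2 * η * (η + τ * D) ≤ 2 * τ * ((D - 1 + η * β) * η) := by nlinarith
  refine hpade.trans ?_
  rw [div_le_div_iff₀ (by positivity) (by positivity)]
  calc L * (L + 2 * τ) * (D * (D + η) * (τ + L))
      = L * (L + 2 * τ) * (D * (D + η)) * (τ + L) := by ring
    _ ≤ 2 * τ * ((D - 1 + η * β) * η) * (τ + L) :=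
        mul_le_mul_of_nonneg_right (hcore.trans hβ') hτL.le
    _ = _ := by ring

lemma hasDerivAt_f₁ {τ η β x : ℝ} (hτ : 0 < τ) (hη : 0 < η) (hD : 0 < (x - 1) * η * β + 1) :
    HasDerivAt (f₁ τ η β)
      (log (τ + log (1 + η / ((x - 1) * η * β + 1))) - log τ
        - x * η ^ 2 * β / (((x - 1) * η * β + 1) * ((x - 1) * η * β + 1 + η)
            * (τ + log (1 + η / ((x - 1) * η * β + 1))))) x := by
  set D := (x - 1) * η * β + 1
  have hu : 0 < 1 + η / D := by positivity
  have hL0 : 0 ≤ log (1 + η / D) := log_nonneg (le_add_of_nonneg_right (div_pos hη hD).le)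
  have hτL : 0 < τ + log (1 + η / D) := by linarith
  have hDer : HasDerivAt (fun y => (y - 1) * η * β + 1) (η * β) x := by
    simpa using ((((hasDerivAt_id x).sub_const 1).mul_const η).mul_const β).add_const 1
  have hL : HasDerivAt (fun y => τ + log (1 + η / ((y - 1) * η * β + 1)))
      ((0 * D - η * (η * β)) / D ^ 2 / (1 + η / D)) x := by
    simpa only [Pi.div_apply] using
      ((((hasDerivAt_const x η).div hDer hD.ne').const_add 1).log hu.ne').const_add τ
  have h : HasDerivAt (f₁ τ η β) (1 * log (τ + log (1 + η / D))
      + x * ((0 * D - η * (η * β)) / D ^ 2 / (1 + η / D) / (τ + log (1 + η / D)))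
      - 1 * log τ) x :=
    ((hasDerivAt_id' x).mul (hL.log hτL.ne')).sub
      (((hasDerivAt_id' x).sub_const 1).mul_const (log τ))
  refine h.congr_deriv ?_
  field_simp
  ring

lemma antitoneOn_f₁ {τ η β : ℝ} (hη : 0 < η) (hτ : 0 < τ) (hτ1 : τ ≤ 1)
    (hβ : η + τ ≤ τ * η * β) : AntitoneOn (f₁ τ η β) (Set.Ici 1) := by
  have hβ0 : 0 ≤ β := by
    by_contra! h
    nlinarith [mul_pos hτ hη]
  have hD : ∀ x ∈ Set.Ici (1 : ℝ), 1 ≤ (x - 1) * η * β + 1 := fun x hx => by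
    have : (0 : ℝ) ≤ x - 1 := sub_nonneg.mpr hx
    have := mul_nonneg (mul_nonneg this hη.le) hβ0
    linarith
  have hderiv := fun x hx => hasDerivAt_f₁ (β := β) (x := x) hτ hη (by linarith [hD x hx])
  refine antitoneOn_of_hasDerivWithinAt_nonpos (convex_Ici 1)
    (fun x hx => (hderiv x hx).continuousAt.continuousWithinAt)
    (fun x hx => (hderiv x (interior_subset hx)).hasDerivWithinAt) fun x hx => ?_
  have := log_add_log_one_add_div_sub_log_le hη hτ hτ1 hβ (hD x (interior_subset hx))
  rw [show x * η ^ 2 * β = ((x - 1) * η * β + 1 - 1 + η * β) * η by ring]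
  linarith

/-- for 0 < τ < 1, η > 0 and β ≥ 1/τ + 1/η,
the function f₁ is quasiconvex on [1, ∞). -/
theorem stmt_5 (τ η β : ℝ) (hη : 0 < η) (hτ0 : 0 < τ) (hτ1 : τ < 1)
    (hβ : β ≥ 1 / τ + 1 / η) :
    QuasiconvexOn ℝ (Set.Ici (1 : ℝ)) (f₁ τ η β) := by
  have hβ' : η + τ ≤ τ * η * β :=
    calc η + τ = (1 / τ + 1 / η) * (τ * η) := by field_simp
      _ ≤ β * (τ * η) := mul_le_mul_of_nonneg_right hβ (by positivity)
      _ = τ * η * β := by ring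
  exact (antitoneOn_f₁ hη hτ0 hτ1.le hβ').quasiconvexOn (convex_Ici 1)
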